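/- arXiv:2001.00836 — 2 statements merged into one kernel-verified Lean document; each statement's English description precedes it below -/
import Mathlib

section
/- If a measurement operator Λ with 0 ≼ Λ ≼ I satisfies Tr(Λρ) ≥ 1 − ε for a density operator ρ and 0 ≤ ε ≤ 1, then the post-measurement state ρ' = √Λ ρ √Λ / Tr(Λρ) satisfies ‖ρ − ρ'‖₁ ≤ 2√ε. -/
open scoped ComplexOrder
/-- The old Mathlib `Matrix.PosSemidef.sqrt` (removed since), restated with its old definition. -/
noncomputable def Matrix.PosSemidef.sqrt {n 𝕜 : Type*} [Fintype n] [RCLike 𝕜] [DecidableEq n]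
    {A : Matrix n n 𝕜} (hA : A.PosSemidef) : Matrix n n 𝕜 :=
  hA.1.eigenvectorUnitary.1 * Matrix.diagonal ((↑) ∘ (√·) ∘ hA.1.eigenvalues) *
    (star hA.1.eigenvectorUnitary : Matrix n n 𝕜)
/-- Trace norm of a complex matrix: trace of the positive square root of `Aᴴ * A`. -/
noncomputable def traceNorm {n : ℕ} (A : Matrix (Fin n) (Fin n) ℂ) : ℝ :=
  ((Matrix.posSemidef_conjTranspose_mul_self A).sqrt.trace).re

/-!
Write `ρ = X Xᴴ` with `X = √ρ`, and the post-measurement state as `Y Yᴴ` with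
`Y = √Λ X / √t`, `t = Tr(Λρ)`. If `S` is the Hermitian unitary with `S H = |H|` for
`H = X Xᴴ - Y Yᴴ`, then `Re Tr(S H) = Re Tr((X - Y)ᴴ S (X + Y))`, so Cauchy–Schwarz for the
Hilbert–Schmidt inner product gives `‖H‖₁ ≤ ‖X - Y‖₂ ‖X + Y‖₂`, which equals
`2 √(1 - (Re Tr(Xᴴ Y))²)` when `‖X‖₂ = ‖Y‖₂ = 1`. Finally `Re Tr(Xᴴ Y) = Tr(√Λ ρ) / √t ≥ √t`,
because `Λ ≤ √Λ` when `0 ≤ Λ ≤ 1`.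
-/

open Matrix
open scoped MatrixOrder

section

variable {A : Type*} [PartialOrder A] [Ring A] [StarRing A] [TopologicalSpace A]
  [StarOrderedRing A] [Algebra ℝ A] [ContinuousFunctionalCalculus ℝ A IsSelfAdjoint]
  [NonnegSpectrumClass ℝ A] [IsSemitopologicalRing A] [T2Space A]

lemma CFC.le_sqrt_of_le_one {a : A} (ha₀ : 0 ≤ a) (ha₁ : a ≤ 1) : a ≤ CFC.sqrt a := by
  rw [CFC.le_one_iff (R := ℝ) a] at ha₁
  rw [CFC.sqrt_eq_real_sqrt a, cfcₙ_eq_cfc]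
  nth_rw 1 [← cfc_id ℝ a]
  rw [cfc_le_iff ..]
  intro x hx
  have hx₀ : 0 ≤ x := spectrum_nonneg_of_nonneg ha₀ hx
  exact Real.le_sqrt_of_sq_le (pow_le_of_le_one hx₀ (ha₁ x hx) two_ne_zero)

end

namespace Matrix

variable {m 𝕜 : Type*} [Fintype m] [RCLike 𝕜]

lemma PosSemidef.sqrt_eq_cfcSqrt [DecidableEq m] {A : Matrix m m 𝕜} (hA : A.PosSemidef) :
    hA.sqrt = CFC.sqrt A := by
  rw [CFC.sqrt_eq_cfc, cfc_nnreal_eq_real _ A hA.nonneg, hA.1.cfc_eq, PosSemidef.sqrt,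
    IsHermitian.cfc, Unitary.conjStarAlgAut_apply]
  congr 3
  funext i
  simp [Real.coe_sqrt, Real.coe_toNNReal', hA.eigenvalues_nonneg i]

lemma PosSemidef.trace_mul_nonneg {P Q : Matrix m m 𝕜} (hP : P.PosSemidef)
    (hQ : Q.PosSemidef) : 0 ≤ (P * Q).trace := by
  classical
  obtain ⟨B, rfl⟩ := CStarAlgebra.nonneg_iff_eq_star_mul_self.mp hQ.nonneg
  rw [← Matrix.mul_assoc, trace_mul_comm, ← Matrix.mul_assoc]
  exact (hP.mul_mul_conjTranspose_same B).trace_nonneg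

lemma trace_mul_le_trace_mul_of_le {P Q ρ : Matrix m m 𝕜} (hPQ : P ≤ Q)
    (hρ : ρ.PosSemidef) : (P * ρ).trace ≤ (Q * ρ).trace := by
  rw [← sub_nonneg, ← trace_sub, ← Matrix.sub_mul]
  exact (sub_nonneg.mpr hPQ).posSemidef.trace_mul_nonneg hρ

lemma re_trace_conjTranspose_mul_le (P Q : Matrix m m 𝕜) :
    RCLike.re (Pᴴ * Q).trace ≤
      √(RCLike.re (Pᴴ * P).trace) * √(RCLike.re (Qᴴ * Q).trace) := by
  classical
  let := toMatrixSeminormedAddCommGroup (1 : Matrix m m 𝕜) PosSemidef.one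
  let := toMatrixInnerProductSpace (1 : Matrix m m 𝕜) PosSemidef.one
  have hinner (x y : Matrix m m 𝕜) : inner 𝕜 x y = (y * xᴴ).trace := by
    change (y * 1 * xᴴ).trace = _
    rw [Matrix.mul_one]
  have h := re_inner_le_norm (𝕜 := 𝕜) Qᴴ Pᴴ
  rw [@norm_eq_sqrt_re_inner 𝕜, @norm_eq_sqrt_re_inner 𝕜, hinner, hinner, hinner] at h
  simp only [conjTranspose_conjTranspose] at h
  exact h.trans_eq (mul_comm _ _)

lemma re_trace_mul_mul_conjTranspose_sub {S : Matrix m m 𝕜} (hS : S.IsHermitian)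
    (X Y : Matrix m m 𝕜) :
    RCLike.re (S * (X * Xᴴ - Y * Yᴴ)).trace = RCLike.re ((X - Y)ᴴ * (S * (X + Y))).trace := by
  have hcross : RCLike.re (Xᴴ * S * Y).trace = RCLike.re (Yᴴ * S * X).trace := by
    rw [← RCLike.conj_re, ← RCLike.star_def, ← trace_conjTranspose]
    simp only [conjTranspose_mul, conjTranspose_conjTranspose, hS.eq, Matrix.mul_assoc]
  have hexpand :
      (X - Y)ᴴ * (S * (X + Y)) = Xᴴ * S * X + Xᴴ * S * Y - Yᴴ * S * X - Yᴴ * S * Y := by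
    rw [conjTranspose_sub]
    noncomm_ring
  have hdiag (Z : Matrix m m 𝕜) : (Zᴴ * S * Z).trace = (S * (Z * Zᴴ)).trace := by
    rw [trace_mul_cycle, trace_mul_comm]
  rw [hexpand, trace_sub, trace_sub, trace_add, hdiag, hdiag, Matrix.mul_sub, trace_sub]
  simp only [map_sub, map_add, hcross]
  ring

lemma IsHermitian.exists_mul_eq_abs [DecidableEq m] {H : Matrix m m 𝕜} (hH : H.IsHermitian) :
    ∃ S : Matrix m m 𝕜, S.IsHermitian ∧ S * S = 1 ∧ S * H = CFC.abs H := by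
  let sign : ℝ → ℝ := fun x ↦ if 0 ≤ x then 1 else -1
  have hcont (f : ℝ → ℝ) : ContinuousOn f (spectrum ℝ H) := H.finite_real_spectrum.continuousOn f
  refine ⟨cfc sign H, cfc_predicate sign H, ?_, ?_⟩
  · rw [← cfc_mul sign sign H (hcont _) (hcont _), ← cfc_const_one ℝ H]
    exact cfc_congr fun x _ ↦ by by_cases hx : 0 ≤ x <;> simp [sign, hx]
  · nth_rw 2 [← cfc_id' ℝ H]
    rw [← cfc_mul sign (fun x ↦ x) H (hcont _) (hcont _), CFC.abs_eq_cfc_norm H]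
    exact cfc_congr fun x _ ↦ by
      by_cases hx : 0 ≤ x
      · simp [sign, hx, abs_of_nonneg hx]
      · simp [sign, hx, abs_of_neg (not_le.mp hx)]

end Matrix

variable {n : ℕ}

lemma traceNorm_eq_re_trace_abs (H : Matrix (Fin n) (Fin n) ℂ) :
    traceNorm H = (CFC.abs H).trace.re := by
  rw [traceNorm, PosSemidef.sqrt_eq_cfcSqrt]
  rfl

lemma traceNorm_mul_conjTranspose_sub_le (X Y : Matrix (Fin n) (Fin n) ℂ) :
    traceNorm (X * Xᴴ - Y * Yᴴ) ≤
      √(((Xᴴ * X).trace.re + (Yᴴ * Y).trace.re) ^ 2 - 4 * (Xᴴ * Y).trace.re ^ 2) := by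
  have hH := (isHermitian_mul_conjTranspose_self X).sub (isHermitian_mul_conjTranspose_self Y)
  obtain ⟨S, hS, hSS, hSH⟩ := hH.exists_mul_eq_abs
  have hnorm : (S * (X + Y))ᴴ * (S * (X + Y)) = (X + Y)ᴴ * (X + Y) := by
    rw [conjTranspose_mul, hS.eq, Matrix.mul_assoc, ← Matrix.mul_assoc S, hSS, Matrix.one_mul]
  have hcross : (Yᴴ * X).trace.re = (Xᴴ * Y).trace.re := by
    rw [← Complex.conj_re, ← Complex.star_def, ← trace_conjTranspose, conjTranspose_mul,
      conjTranspose_conjTranspose]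
  have hsub_nonneg : 0 ≤ ((X - Y)ᴴ * (X - Y)).trace.re :=
    (Complex.nonneg_iff.mp (posSemidef_conjTranspose_mul_self _).trace_nonneg).1
  calc traceNorm (X * Xᴴ - Y * Yᴴ)
      = ((X - Y)ᴴ * (S * (X + Y))).trace.re := by
        rw [traceNorm_eq_re_trace_abs, ← hSH]
        exact re_trace_mul_mul_conjTranspose_sub hS X Y
    _ ≤ √(((X - Y)ᴴ * (X - Y)).trace.re) * √(((X + Y)ᴴ * (X + Y)).trace.re) :=
        (re_trace_conjTranspose_mul_le (X - Y) (S * (X + Y))).trans_eq (by rw [hnorm]; rfl)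
    _ = _ := by
        rw [← Real.sqrt_mul hsub_nonneg]
        congr 1
        simp only [conjTranspose_sub, conjTranspose_add, Matrix.sub_mul, Matrix.mul_sub,
          Matrix.add_mul, Matrix.mul_add, trace_sub, trace_add, Complex.sub_re, Complex.add_re,
          hcross]
        ring

lemma traceNorm_sub_inv_smul_mul_mul_le {ρ A : Matrix (Fin n) (Fin n) ℂ} (hρ : ρ.PosSemidef)
    (hρtr : ρ.trace = 1) (hA : A.IsHermitian) {t : ℝ} (ht : 0 ≤ t) :
    traceNorm (ρ - (t : ℂ)⁻¹ • (A * ρ * A)) ≤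
      √((1 + t⁻¹ * (A * A * ρ).trace.re) ^ 2 - 4 * (t⁻¹ * (A * ρ).trace.re ^ 2)) := by
  set X := CFC.sqrt ρ
  have hX : Xᴴ = X := (CFC.sqrt_nonneg ρ).posSemidef.1
  have hXX : X * X = ρ := CFC.sqrt_mul_sqrt_self ρ hρ.nonneg
  set c := √t
  have hcc : c * c = t := Real.mul_self_sqrt ht
  set Y := c⁻¹ • (A * X)
  have hY : Yᴴ = c⁻¹ • (X * A) := by
    rw [conjTranspose_smul, star_trivial, conjTranspose_mul, hA.eq, hX]
  have hstate : ρ - (t : ℂ)⁻¹ • (A * ρ * A) = X * Xᴴ - Y * Yᴴ := by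
    rw [hY, smul_mul_smul, hX, hXX, ← hcc, ← Complex.ofReal_inv, Complex.coe_smul, mul_inv,
      ← hXX]
    noncomm_ring
  have hXX_tr : (Xᴴ * X).trace.re = 1 := by rw [hX, hXX, hρtr, Complex.one_re]
  have hYY_tr : (Yᴴ * Y).trace.re = t⁻¹ * (A * A * ρ).trace.re := by
    rw [hY, smul_mul_smul, trace_smul, Complex.smul_re, smul_eq_mul, ← mul_inv, hcc,
      show X * A * (A * X) = X * (A * A) * X by noncomm_ring, trace_mul_cycle, hXX,
      trace_mul_comm]
  have hXY_tr : (Xᴴ * Y).trace.re ^ 2 = t⁻¹ * (A * ρ).trace.re ^ 2 := by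
    rw [hX, Matrix.mul_smul, trace_smul, Complex.smul_re, smul_eq_mul, ← Matrix.mul_assoc,
      trace_mul_cycle, hXX, trace_mul_comm, mul_pow, inv_pow, sq c, hcc]
  rw [hstate, ← hXX_tr, ← hYY_tr, ← hXY_tr]
  exact traceNorm_mul_conjTranspose_sub_le X Y

theorem gentle_measurement_general {n : ℕ} (ρ Λ : Matrix (Fin n) (Fin n) ℂ)
    (hρ : ρ.PosSemidef) (hρtr : ρ.trace = 1)
    (hΛ : Λ.PosSemidef) (hΛle : ((1 : Matrix (Fin n) (Fin n) ℂ) - Λ).PosSemidef)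
    (ε : ℝ)
    (h : 1 - ε ≤ ((Λ * ρ).trace).re) :
    traceNorm (ρ - ((Λ * ρ).trace)⁻¹ • (hΛ.sqrt * ρ * hΛ.sqrt)) ≤ 2 * Real.sqrt ε := by
  obtain ⟨t, ht₀, ht⟩ : ∃ t : ℝ, 0 ≤ t ∧ (t : ℂ) = (Λ * ρ).trace :=
    RCLike.nonneg_iff_exists_ofReal.mp (hΛ.trace_mul_nonneg hρ)
  have hA : (CFC.sqrt Λ).IsHermitian := (CFC.sqrt_nonneg Λ).posSemidef.1
  have hAA : CFC.sqrt Λ * CFC.sqrt Λ = Λ := CFC.sqrt_mul_sqrt_self Λ hΛ.nonneg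
  have htA : t ≤ (CFC.sqrt Λ * ρ).trace.re := by
    have := Complex.re_le_re <| trace_mul_le_trace_mul_of_le
      (CFC.le_sqrt_of_le_one hΛ.nonneg (sub_nonneg.mp hΛle.nonneg)) hρ
    rwa [← ht, Complex.ofReal_re] at this
  rw [← ht, Complex.ofReal_re] at h
  rw [← ht, hΛ.sqrt_eq_cfcSqrt]
  refine (traceNorm_sub_inv_smul_mul_mul_le hρ hρtr hA ht₀).trans ?_
  rw [hAA, ← ht, Complex.ofReal_re, ← div_eq_inv_mul]
  have hsq : t ≤ t⁻¹ * (CFC.sqrt Λ * ρ).trace.re ^ 2 :=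
    calc t = t⁻¹ * (t * t) := by rw [← mul_assoc, inv_mul_mul_self]
      _ ≤ _ := by gcongr; nlinarith
  calc _ ≤ √(2 ^ 2 * ε) := by
        gcongr
        nlinarith [div_self_le_one t, div_nonneg ht₀ ht₀]
    _ = 2 * √ε := by rw [Real.sqrt_mul (by norm_num), Real.sqrt_sq (by norm_num)]

/-- Gentle measurement lemma. -/
theorem gentle_measurement {n : ℕ} (ρ Λ : Matrix (Fin n) (Fin n) ℂ)
    (hρ : ρ.PosSemidef) (hρtr : ρ.trace = 1)
    (hΛ : Λ.PosSemidef) (hΛle : ((1 : Matrix (Fin n) (Fin n) ℂ) - Λ).PosSemidef)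
    (ε : ℝ) (hε0 : 0 ≤ ε) (hε1 : ε ≤ 1)
    (h : 1 - ε ≤ ((Λ * ρ).trace).re) :
    traceNorm (ρ - ((Λ * ρ).trace)⁻¹ • (hΛ.sqrt * ρ * hΛ.sqrt)) ≤ 2 * Real.sqrt ε :=
  gentle_measurement_general ρ Λ hρ hρtr hΛ hΛle ε h
end

section
/- For any type P̂ over a finite alphabet 𝒳 with denominator n, the size of the type class satisfies (n+1)^{-|𝒳|} · 2^{nH(P̂)} ≤ |T(P̂)| ≤ 2^{nH(P̂)}, where H(P̂) is the Shannon entropy of P̂. -/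
/-!
Let `Q = ∏ₐ P(a)^{n P(a)} = 2^{-n H(P)}`, the probability under `Pⁿ` of each sequence of type `P`.
Since `Pⁿ(T(P)) = |T(P)| Q ≤ 1`, the upper bound follows. For the lower bound, `|T(c)| = n! / ∏ₐ c(a)!`
(orbit–stabilizer for `Perm (Fin n)` acting by precomposition), and the elementary inequality
`k! k^c ≤ c! k^k` shows that among all type classes `T(P)` has the largest `Pⁿ`-probability;
as there are at most `(n+1)^{|𝒳|}` type classes and their probabilities add up to `1`, we get
`1 ≤ (n+1)^{|𝒳|} |T(P)| Q`.
-/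

noncomputable def H2 {α : Type*} [Fintype α] (p : α → ℝ) : ℝ :=
  -∑ a, p a * Real.logb 2 (p a)

open Finset
open scoped Nat

theorem Nat.factorial_mul_pow_le_factorial_mul_pow (k c : ℕ) : k ! * k ^ c ≤ c ! * k ^ k := by
  rcases le_total c k with h | h
  · calc k ! * k ^ c = (k - (k - c))! * k.descFactorial (k - c) * k ^ c := by
          rw [Nat.factorial_mul_descFactorial (Nat.sub_le k c)]
      _ ≤ c ! * k ^ (k - c) * k ^ c := by
          rw [Nat.sub_sub_self h]
          gcongr
          exact Nat.descFactorial_le_pow k (k - c)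
      _ = c ! * k ^ k := by rw [mul_assoc, ← pow_add, Nat.sub_add_cancel h]
  · calc k ! * k ^ c = k ! * k ^ (c - k) * k ^ k := by
          rw [mul_assoc, ← pow_add, Nat.sub_add_cancel h]
      _ ≤ c ! * k ^ k := by gcongr; exact Nat.factorial_mul_pow_sub_le_factorial h

section TypeClass

variable {ι α : Type*} [Fintype ι] [DecidableEq ι] [Fintype α] [DecidableEq α]

variable (ι) in
def typeClass (c : α → ℕ) : Finset (ι → α) := {x | ∀ a, #{i | x i = a} = c a}

omit [DecidableEq ι] in
theorem sum_card_fiber_eq_card (x : ι → α) : ∑ a, #{i | x i = a} = Fintype.card ι := by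
  rw [Finset.sum_card_fiberwise_eq_card_filter]
  simp

theorem mem_typeClass {c : α → ℕ} {x : ι → α} : x ∈ typeClass ι c ↔ ∀ a, #{i | x i = a} = c a := by
  simp [typeClass]

theorem typeClass_eq_empty {c : α → ℕ} (hc : ∑ a, c a ≠ Fintype.card ι) : typeClass ι c = ∅ := by
  refine eq_empty_of_forall_notMem fun x hx => hc ?_
  rw [← sum_card_fiber_eq_card x]
  exact Finset.sum_congr rfl fun a _ => (mem_typeClass.1 hx a).symm

theorem typeClass_nonempty {c : α → ℕ} (hc : ∑ a, c a = Fintype.card ι) :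
    (typeClass ι c).Nonempty := by
  let e : ι ≃ Σ a, Fin (c a) := Fintype.equivOfCardEq (by simp [hc])
  refine ⟨fun i => (e i).1, mem_typeClass.2 fun a => ?_⟩
  rw [← Fintype.card_subtype]
  exact (Fintype.card_congr ((e.subtypeEquiv fun _ => Iff.rfl).trans (Equiv.sigmaSubtype a))).trans
    (Fintype.card_fin _)

section Orbit

open Equiv MulAction

theorem coe_typeClass_eq_orbit (f : ι → α) :
    (typeClass ι (fun a => #{i | f i = a}) : Set (ι → α)) = orbit (Perm ι)ᵈᵐᵃ f := by
  have smul_eq (σ : (Perm ι)ᵈᵐᵃ) : σ • f = f ∘ ⇑(DomMulAct.mk.symm σ : Perm ι) :=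
    funext fun _ => rfl
  ext g
  simp only [mem_coe, mem_typeClass, mem_orbit_iff, smul_eq]
  constructor
  · intro hg
    have e (a : α) : {i // g i = a} ≃ {i // f i = a} :=
      Fintype.equivOfCardEq (by rw [Fintype.card_subtype, Fintype.card_subtype, hg])
    exact ⟨DomMulAct.mk (ofFiberEquiv e), funext (ofFiberEquiv_map e)⟩
  · rintro ⟨σ, rfl⟩ a
    simp only [← Fintype.card_subtype]
    exact Fintype.card_congr ((DomMulAct.mk.symm σ).subtypeEquiv fun _ => Iff.rfl)

theorem card_stabilizer_domMulAct_perm (f : ι → α) :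
    Nat.card (stabilizer (Perm ι)ᵈᵐᵃ f) = ∏ a, (#{i | f i = a})! := by
  rw [Nat.card_congr (subtypeEquiv (q := fun g : Perm ι => f ∘ g = f) DomMulAct.mk.symm
      fun _ => DomMulAct.mem_stabilizer_iff),
    Nat.card_eq_fintype_card, DomMulAct.stabilizer_card]
  simp only [Fintype.card_subtype]

theorem card_typeClass_mul_prod_factorial {c : α → ℕ} (hc : ∑ a, c a = Fintype.card ι) :
    #(typeClass ι c) * ∏ a, (c a)! = (Fintype.card ι)! := by
  obtain ⟨f, hf⟩ := typeClass_nonempty hc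
  obtain rfl : c = fun a => #{i | f i = a} := funext fun a => (mem_typeClass.1 hf a).symm
  rw [← Set.ncard_coe_finset, coe_typeClass_eq_orbit, ← index_stabilizer,
    ← card_stabilizer_domMulAct_perm, mul_comm, Subgroup.card_mul_index,
    Nat.card_congr DomMulAct.mk.symm, Nat.card_perm, Nat.card_eq_fintype_card]

end Orbit

theorem prod_eq_prod_pow_of_mem_typeClass {M : Type*} [CommMonoid M] (P : α → M) {c : α → ℕ}
    {x : ι → α} (hx : x ∈ typeClass ι c) : ∏ i, P (x i) = ∏ a, P a ^ c a := by
  rw [← prod_fiberwise' univ x P]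
  exact prod_congr rfl fun a _ => by rw [prod_const, mem_typeClass.1 hx a]

theorem sum_typeClass_prod {R : Type*} [CommSemiring R] (P : α → R) (c : α → ℕ) :
    ∑ x ∈ typeClass ι c, ∏ i, P (x i) = #(typeClass ι c) * ∏ a, P a ^ c a := by
  rw [sum_congr rfl fun x hx => prod_eq_prod_pow_of_mem_typeClass P hx, sum_const, nsmul_eq_mul]

omit [DecidableEq α] in
theorem sum_pi_prod_eq_one {R : Type*} [CommSemiring R] {P : α → R} (hP1 : ∑ a, P a = 1) :
    ∑ x : ι → α, ∏ i, P (x i) = 1 := by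
  rw [← Fintype.prod_sum fun _ a => P a]
  simp [hP1]

theorem card_typeClass_mul_prod_pow_le_one {P : α → ℝ} (hP0 : ∀ a, 0 ≤ P a)
    (hP1 : ∑ a, P a = 1) (c : α → ℕ) : #(typeClass ι c) * ∏ a, P a ^ c a ≤ 1 := by
  rw [← sum_typeClass_prod, ← sum_pi_prod_eq_one (ι := ι) hP1]
  exact sum_le_sum_of_subset_of_nonneg (subset_univ _) fun x _ _ =>
    prod_nonneg fun i _ => hP0 _

theorem one_le_card_add_one_pow_mul {P : α → ℝ} (hP1 : ∑ a, P a = 1) {M : ℝ}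
    (hM : ∀ c, #(typeClass ι c) * ∏ a, P a ^ c a ≤ M) :
    1 ≤ (Fintype.card ι + 1 : ℝ) ^ Fintype.card α * M := by
  let type (x : ι → α) (a : α) : Fin (Fintype.card ι + 1) :=
    ⟨#{i | x i = a}, Nat.lt_succ_of_le (card_le_univ _)⟩
  have fiber_eq (t : α → Fin (Fintype.card ι + 1)) :
      ({x | type x = t} : Finset (ι → α)) = typeClass ι (fun a => t a) := by
    ext x
    simp [type, mem_typeClass, funext_iff, Fin.ext_iff]
  calc 1 = ∑ t : α → Fin (Fintype.card ι + 1), ∑ x ∈ typeClass ι (fun a => t a), ∏ i, P (x i) := by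
        rw [← sum_pi_prod_eq_one (ι := ι) hP1, ← sum_fiberwise univ type]
        simp only [fiber_eq]
    _ ≤ ∑ t : α → Fin (Fintype.card ι + 1), M :=
        sum_le_sum fun t _ => (sum_typeClass_prod P _).trans_le (hM _)
    _ = _ := by
        rw [sum_const, card_univ, Fintype.card_fun, Fintype.card_fin, nsmul_eq_mul]
        push_cast
        rfl

theorem card_typeClass_mul_prod_pow_le_of_sum_eq {k c : α → ℕ}
    (hk : ∑ a, k a = Fintype.card ι) (hc : ∑ a, c a = Fintype.card ι) :
    #(typeClass ι c) * ∏ a, k a ^ c a ≤ #(typeClass ι k) * ∏ a, k a ^ k a := by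
  refine Nat.le_of_mul_le_mul_right (c := (∏ a, (c a)!) * ∏ a, (k a)!) ?_ (by positivity)
  calc (#(typeClass ι c) * ∏ a, k a ^ c a) * ((∏ a, (c a)!) * ∏ a, (k a)!)
      = (Fintype.card ι)! * ∏ a, ((k a)! * k a ^ c a) := by
        rw [← card_typeClass_mul_prod_factorial hc, prod_mul_distrib]
        ring
    _ ≤ (Fintype.card ι)! * ∏ a, ((c a)! * k a ^ k a) :=
        Nat.mul_le_mul_left _
          (prod_le_prod' fun a _ => Nat.factorial_mul_pow_le_factorial_mul_pow _ _)
    _ = (#(typeClass ι k) * ∏ a, k a ^ k a) * ((∏ a, (c a)!) * ∏ a, (k a)!) := by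
        rw [← card_typeClass_mul_prod_factorial hk, prod_mul_distrib]
        ring

theorem card_typeClass_mul_prod_pow_le {P : α → ℝ} {k : α → ℕ}
    (hP : ∀ a, P a = k a / Fintype.card ι) (hk : ∑ a, k a = Fintype.card ι) (c : α → ℕ) :
    #(typeClass ι c) * ∏ a, P a ^ c a ≤ #(typeClass ι k) * ∏ a, P a ^ k a := by
  have prod_eq (e : α → ℕ) (he : ∑ a, e a = Fintype.card ι) :
      ∏ a, P a ^ e a = (∏ a, (k a : ℝ) ^ e a) / (Fintype.card ι : ℝ) ^ Fintype.card ι := by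
    simp_rw [hP, div_pow]
    rw [prod_div_distrib, prod_pow_eq_pow_sum, he]
  by_cases hc : ∑ a, c a = Fintype.card ι
  · rw [prod_eq c hc, prod_eq k hk, mul_div_assoc', mul_div_assoc']
    exact div_le_div_of_nonneg_right
      (mod_cast card_typeClass_mul_prod_pow_le_of_sum_eq hk hc) (by positivity)
  · rw [typeClass_eq_empty hc, card_empty, Nat.cast_zero, zero_mul]
    exact mul_nonneg (Nat.cast_nonneg _)
      (prod_nonneg fun a _ => pow_nonneg (by rw [hP]; positivity) _)

end TypeClass

theorem two_rpow_mul_H2_eq_inv_prod {α : Type*} [Fintype α] {n : ℕ} {P : α → ℝ} {k : α → ℕ}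
    (hk : ∀ a, (k a : ℝ) = n * P a) : (2 : ℝ) ^ (n * H2 P) = (∏ a, P a ^ k a)⁻¹ := by
  have hpos (a : α) : 0 < P a ^ k a := by
    rcases (k a).eq_zero_or_pos with h | h
    · simp [h]
    · have : 0 < n * P a := by rw [← hk]; exact_mod_cast h
      exact pow_pos (pos_of_mul_pos_right this n.cast_nonneg) _
  have hlog : Real.logb 2 (∏ a, P a ^ k a) = -(n * H2 P) := by
    rw [Real.logb_prod _ _ fun a _ => (hpos a).ne', H2, mul_neg, neg_neg, mul_sum]
    exact sum_congr rfl fun a _ => by rw [Real.logb_pow, hk, mul_assoc]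
  rw [← neg_neg (n * H2 P : ℝ), ← hlog, Real.rpow_neg zero_le_two,
    Real.rpow_logb two_pos (by norm_num) (prod_pos fun a _ => hpos a)]

/-- Size of a type class: for a type `P` with denominator `n`,
`(n+1)^{-|𝒳|} 2^{nH(P)} ≤ |T(P)| ≤ 2^{nH(P)}`. -/
theorem type_class_size {𝒳 : Type*} [Fintype 𝒳] [DecidableEq 𝒳] (n : ℕ) (hn : 0 < n)
    (P : 𝒳 → ℝ) (hP0 : ∀ a, 0 ≤ P a) (hP1 : ∑ a, P a = 1)
    (htype : ∀ a, ∃ k : ℕ, P a = (k : ℝ) / n) :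
    ((n : ℝ) + 1)⁻¹ ^ (Fintype.card 𝒳) * (2 : ℝ) ^ ((n : ℝ) * H2 P)
      ≤ (Nat.card {x : Fin n → 𝒳 //
          ∀ a, ((Finset.univ.filter (fun i => x i = a)).card : ℝ) / n = P a} : ℝ)
    ∧ (Nat.card {x : Fin n → 𝒳 //
          ∀ a, ((Finset.univ.filter (fun i => x i = a)).card : ℝ) / n = P a} : ℝ)
      ≤ (2 : ℝ) ^ ((n : ℝ) * H2 P) := by
  choose k hk using htype
  have hn' : (n : ℝ) ≠ 0 := by positivity
  have hkn (a : 𝒳) : (k a : ℝ) = n * P a := by rw [hk a, mul_div_cancel₀ _ hn']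
  have hk_sum : ∑ a, k a = Fintype.card (Fin n) := by
    rw [Fintype.card_fin, ← Nat.cast_inj (R := ℝ)]
    push_cast
    simp_rw [hkn, ← mul_sum, hP1, mul_one]
  have hcard : Nat.card {x : Fin n → 𝒳 // ∀ a, (#{i | x i = a} : ℝ) / n = P a}
      = #(typeClass (Fin n) k) := by
    simp only [typeClass, hk, div_left_inj' hn', Nat.cast_inj]
    rw [Nat.card_eq_fintype_card, Fintype.card_subtype]
  have upper := card_typeClass_mul_prod_pow_le_one (ι := Fin n) hP0 hP1 k
  have lower := one_le_card_add_one_pow_mul hP1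
    (card_typeClass_mul_prod_pow_le (fun a => by rw [hk a, Fintype.card_fin]) hk_sum)
  rw [Fintype.card_fin] at lower
  have hQ : 0 < ∏ a, P a ^ k a := by
    rw [← inv_pos, ← two_rpow_mul_H2_eq_inv_prod hkn]
    positivity
  rw [hcard, two_rpow_mul_H2_eq_inv_prod hkn, inv_pow, ← mul_inv]
  constructor
  · rw [inv_le_iff_one_le_mul₀ (by positivity)]
    linarith
  · rw [← one_div, le_div_iff₀ hQ]
    exact upper
end
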